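/- arXiv:math/0610140 — 4 statements merged into one kernel-verified Lean document; each statement's English description precedes it below -/
import Mathlib

section
/- For any finite family of n points on the N-dimensional sphere S^N with n ≥ N, there exists a closed hemisphere containing at least ⌊(n+N+1)/2⌋ of these points (counted with multiplicity). -/
open scoped RealInnerProductSpace

theorem stmt_1 (N n : ℕ) (hn : N ≤ n)
    (x : Fin n → EuclideanSpace ℝ (Fin (N + 1)))
    (hx : ∀ i, ‖x i‖ = 1) :
    ∃ p : EuclideanSpace ℝ (Fin (N + 1)), ‖p‖ = 1 ∧
      (n + N + 1) / 2 ≤ (Finset.univ.filter fun i => 0 ≤ ⟪x i, p⟫).card := by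
  classical
  set S : Submodule ℝ (EuclideanSpace ℝ (Fin (N + 1))) :=
    Submodule.span ℝ (Set.range fun i : Fin N => x (Fin.castLE hn i)) with hS
  -- the span of N vectors has rank at most N
  have hrank : Module.finrank ℝ S ≤ N := by
    have h := finrank_range_le_card (R := ℝ) (fun i : Fin N => x (Fin.castLE hn i))
    rw [Fintype.card_fin] at h
    exact h
  -- hence its orthogonal complement is nontrivial
  have htot : Module.finrank ℝ (EuclideanSpace ℝ (Fin (N + 1))) = N + 1 := finrank_euclideanSpace_fin
  have horth : 0 < Module.finrank ℝ Sᗮ := by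
    have := Submodule.finrank_add_finrank_orthogonal (K := S)
    omega
  obtain ⟨v, hvS, hv0⟩ := exists_mem_ne_zero_of_rank_pos (s := Sᗮ) (Module.lt_rank_of_lt_finrank horth)
  -- normalize
  set p : EuclideanSpace ℝ (Fin (N + 1)) := ‖v‖⁻¹ • v with hp
  have hvnorm : ‖v‖ ≠ 0 := norm_ne_zero_iff.mpr hv0
  have hpnorm : ‖p‖ = 1 := by
    rw [hp, norm_smul, norm_inv, norm_norm, inv_mul_cancel₀ hvnorm]
  -- first N points are orthogonal to p
  have hortho : ∀ i : Fin N, ⟪x (Fin.castLE hn i), p⟫ = 0 := by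
    intro i
    have hmem : x (Fin.castLE hn i) ∈ S :=
      Submodule.subset_span ⟨i, rfl⟩
    have : ⟪x (Fin.castLE hn i), v⟫ = 0 :=
      (Submodule.mem_orthogonal S v).mp hvS _ hmem
    rw [hp, real_inner_smul_right, this, mul_zero]
  set A := Finset.univ.filter fun i : Fin n => 0 ≤ ⟪x i, p⟫ with hA
  set B := Finset.univ.filter fun i : Fin n => 0 ≤ ⟪x i, -p⟫ with hB
  have hunion : A ∪ B = Finset.univ := by
    ext i
    simp only [Finset.mem_union, hA, hB, Finset.mem_filter, Finset.mem_univ, true_and,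
      inner_neg_right, iff_true]
    rcases le_total 0 ⟪x i, p⟫ with h | h
    · exact Or.inl h
    · exact Or.inr (by linarith)
  have hinter : N ≤ (A ∩ B).card := by
    have hsub : (Finset.univ.image fun i : Fin N => Fin.castLE hn i) ⊆ A ∩ B := by
      intro j hj
      simp only [Finset.mem_image, Finset.mem_univ, true_and] at hj
      obtain ⟨i, rfl⟩ := hj
      simp only [hA, hB, Finset.mem_inter, Finset.mem_filter, Finset.mem_univ, true_and,
        inner_neg_right]
      exact ⟨le_of_eq (hortho i).symm, by rw [hortho i]; simp⟩
    have hcard : (Finset.univ.image fun i : Fin N => Fin.castLE hn i).card = N := by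
      rw [Finset.card_image_of_injective _ (Fin.castLE_injective hn)]
      simp
    calc N = _ := hcard.symm
      _ ≤ (A ∩ B).card := Finset.card_le_card hsub
  have hsum : n + N ≤ A.card + B.card := by
    have := Finset.card_union_add_card_inter A B
    rw [hunion] at this
    simp only [Finset.card_univ, Fintype.card_fin] at this
    omega
  rcases le_total A.card B.card with h | h
  · exact ⟨-p, by simpa using hpnorm, by rw [← hB]; omega⟩
  · exact ⟨p, hpnorm, by rw [← hA]; omega⟩
end

section
/- For every n > N there exists a set of n points on S^N that is equator-balanced: for every great circle passing through N of the points, each of the two open hemispheres contains at least ⌊(n-N)/2⌋ of the remaining points. Concretely, the normalizations of the vectors y_i = (-1)^i (1, i, i^2, …, i^N), i = 1,…,n, form such a set. -/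
open scoped RealInnerProductSpace

/-- The Vandermonde-type vectors `y i = (-1)^i • (1, i, i², …, i^N)` for `i = 1, …, n`,
here indexed by `i : Fin n` via `i.val + 1`. -/
noncomputable def vanderVec (N n : ℕ) (i : Fin n) : EuclideanSpace ℝ (Fin (N + 1)) :=
  WithLp.toLp 2 (fun j => (-1 : ℝ) ^ ((i : ℕ) + 1) * ((i : ℕ) + 1 : ℝ) ^ (j : ℕ))

/-- The normalizations of the vectors `y i`, lying on the unit sphere `S^N`. -/
noncomputable def vanderPoint (N n : ℕ) (i : Fin n) : EuclideanSpace ℝ (Fin (N + 1)) :=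
  ‖vanderVec N n i‖⁻¹ • vanderVec N n i

/-!
Pair `p` with the polynomial `Q` whose coefficient vector is `p`; then
`⟪y i, p⟫ = (-1)^i Q(i)`. The `N` points of `s` are roots of `Q`, which has degree at most `N`,
so `Q = c ∏_{t ∈ s} (X - t)` with `c ≠ 0`. Between two consecutive indices `a < b` outside `s`
the product changes sign exactly `b - a - 1` times, which together with `(-1)^a (-1)^b`
makes the inner products at `a` and `b` of opposite signs. Along the `n - N` indices outside `s`
the signs therefore alternate, so each sign occurs at least `⌊(n - N)/2⌋` times.
-/

open Finset Polynomial

theorem Fin.div_two_le_card_filter_of_or_succ {m : ℕ} (P : Fin m → Prop) [DecidablePred P]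
    (hP : ∀ k l : Fin m, (l : ℕ) = k + 1 → P k ∨ P l) : m / 2 ≤ #{k | P k} := by
  -- from each pair `{2j, 2j+1}` pick an index where `P` holds
  let f : Fin (m / 2) → Fin m := fun j =>
    if P ⟨2 * j, by omega⟩ then ⟨2 * j, by omega⟩ else ⟨2 * j + 1, by omega⟩
  have hf : ∀ j, (f j : ℕ) / 2 = j := fun j => by unfold f; split_ifs <;> simp; omega
  calc m / 2 = #(univ : Finset (Fin (m / 2))) := by simp
    _ ≤ #{k | P k} := by
      refine card_le_card_of_injOn f (fun j _ => ?_) (fun i _ j _ hij => ?_)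
      · have := hP ⟨2 * j, by omega⟩ ⟨2 * j + 1, by omega⟩ rfl
        unfold f
        split_ifs with h <;> simp_all
      · exact Fin.ext <| by rw [← hf i, ← hf j, hij]

theorem Finset.card_div_two_le_card_filter_of_or_consecutive {α : Type*} [LinearOrder α]
    (T : Finset α) (P : α → Prop) [DecidablePred P]
    (hP : ∀ a ∈ T, ∀ b ∈ T, a < b → (∀ c ∈ T, a < c → b ≤ c) → P a ∨ P b) :
    #T / 2 ≤ #{a ∈ T | P a} := by
  set e := T.orderEmbOfFin rfl
  calc #T / 2 ≤ #{k | P (e k)} := by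
        refine Fin.div_two_le_card_filter_of_or_succ _ fun k l hkl => ?_
        have hlt : k < l := Fin.lt_def.2 (by omega)
        refine hP _ (T.orderEmbOfFin_mem rfl k) _ (T.orderEmbOfFin_mem rfl l) (e.strictMono hlt) ?_
        intro c hc hkc
        obtain ⟨i, rfl⟩ : c ∈ Set.range e := by rw [T.range_orderEmbOfFin]; exact hc
        have : k < i := e.lt_iff_lt.1 hkc
        exact e.le_iff_le.2 (Fin.le_def.2 (by omega))
    _ ≤ #{a ∈ T | P a} := by
        refine card_le_card_of_injOn e (fun k hk => ?_) e.injective.injOn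
        simp only [coe_filter, Set.mem_ofPred_eq, mem_univ, true_and] at hk ⊢
        exact ⟨T.orderEmbOfFin_mem rfl k, hk⟩

theorem Polynomial.eval_ofFn {R : Type*} [CommSemiring R] [DecidableEq R] {m : ℕ} (v : Fin m → R)
    (x : R) :
    (ofFn m v).eval x = ∑ j, v j * x ^ (j : ℕ) := by
  simp [ofFn_eq_sum_monomial, eval_finsetSum]

theorem Polynomial.eq_C_leadingCoeff_mul_prod_X_sub_C {R : Type*} [CommRing R] [IsDomain R]
    {Q : R[X]} (hQ : Q ≠ 0) {S : Finset R} (hdeg : Q.natDegree ≤ #S) (hS : ∀ r ∈ S, Q.IsRoot r) :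
    Q = C Q.leadingCoeff * ∏ r ∈ S, (X - C r) := by
  have hsub : S.val ≤ Q.roots :=
    (Multiset.le_iff_subset S.nodup).2 fun r hr => (mem_roots hQ).2 (hS r hr)
  have hroots : S.val = Q.roots :=
    Multiset.eq_of_le_of_card_le hsub ((card_roots' Q).trans hdeg)
  have hcard : Q.roots.card = Q.natDegree :=
    le_antisymm (card_roots' Q) (by rw [← hroots]; exact hdeg)
  rw [prod_eq_multiset_prod, hroots]
  exact (C_leadingCoeff_mul_prod_multiset_X_sub_C hcard).symm

theorem pos_neg_one_pow_card_mul_prod_sub_mul_sub {ι : Type*} [LinearOrder ι] {ξ : ι → ℝ}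
    (hξ : StrictMono ξ) (s : Finset ι) {a b : ι} (hab : a < b) (ha : a ∉ s) (hb : b ∉ s) :
    0 < (-1) ^ #{t ∈ s | a < t ∧ t < b} * ∏ t ∈ s, (ξ a - ξ t) * (ξ b - ξ t) := by
  rw [← prod_filter_mul_prod_filter_not s (fun t => a < t ∧ t < b), ← mul_assoc,
    ← prod_const, ← prod_mul_distrib]
  refine mul_pos (prod_pos fun t ht => ?_) (prod_pos fun t ht => ?_)
  · obtain ⟨-, hat, htb⟩ := mem_filter.1 ht
    have := hξ hat
    have := hξ htb
    nlinarith
  · obtain ⟨hts, hnot⟩ := mem_filter.1 ht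
    have hta : t ≠ a := ne_of_mem_of_not_mem hts ha
    have htb : t ≠ b := ne_of_mem_of_not_mem hts hb
    rcases lt_or_gt_of_ne hta with h | h
    · have := hξ h; have := hξ hab; nlinarith
    · have := hξ (lt_of_le_of_ne (not_lt.1 fun h' => hnot ⟨h, h'⟩) htb.symm)
      have := hξ hab; nlinarith

theorem neg_one_pow_succ_mul_neg_one_pow_succ {a b : ℕ} (hab : a < b) :
    (-1 : ℝ) ^ (a + 1) * (-1) ^ (b + 1) = -(-1) ^ (b - a - 1) := by
  obtain ⟨d, rfl⟩ := Nat.exists_eq_add_of_lt hab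
  rw [show a + d + 1 - a - 1 = d by omega, ← pow_add,
    show a + 1 + (a + d + 1 + 1) = 2 * (a + 1) + d + 1 by ring, pow_succ, pow_add, pow_mul]
  norm_num

theorem vanderVec_ne_zero (N n : ℕ) (i : Fin n) : vanderVec N n i ≠ 0 := by
  intro h
  simpa [vanderVec] using congrArg (fun v : EuclideanSpace ℝ (Fin (N + 1)) => v 0) h

theorem norm_vanderPoint (N n : ℕ) (i : Fin n) : ‖vanderPoint N n i‖ = 1 :=
  norm_smul_inv_norm (vanderVec_ne_zero N n i)

theorem inner_vanderVec (N n : ℕ) (i : Fin n) (v : EuclideanSpace ℝ (Fin (N + 1))) :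
    ⟪vanderVec N n i, v⟫ = (-1) ^ ((i : ℕ) + 1) * (ofFn (N + 1) v.ofLp).eval ((i : ℝ) + 1) := by
  simp only [PiLp.inner_apply, vanderVec, RCLike.inner_apply, conj_trivial, eval_ofFn, mul_sum]
  exact sum_congr rfl fun j _ => by ring

theorem exists_inner_vanderVec_eq_mul_prod {N n : ℕ} {s : Finset (Fin n)} (hs : #s = N)
    {p : EuclideanSpace ℝ (Fin (N + 1))} (hp : p ≠ 0)
    (hperp : ∀ i ∈ s, ⟪vanderPoint N n i, p⟫ = 0) :
    ∃ c ≠ 0, ∀ i, ⟪vanderVec N n i, p⟫ = (-1) ^ ((i : ℕ) + 1) * c * ∏ t ∈ s, ((i : ℝ) - t) := by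
  set Q := ofFn (N + 1) p.ofLp
  set ξ : Fin n → ℝ := fun i => (i : ℝ) + 1
  have hξ : ξ.Injective := fun i j h => Fin.ext (by simpa [ξ] using h)
  have hQ : Q ≠ 0 := by
    rw [Ne, ← map_zero (ofFn (N + 1)), (injective_ofFn _).eq_iff]
    exact fun h => hp (by simpa using congrArg (WithLp.toLp 2) h)
  have hroots : ∀ r ∈ s.image ξ, Q.IsRoot r := by
    simp only [mem_image, forall_exists_index, and_imp, forall_apply_eq_imp_iff₂]
    intro i hi
    simpa [vanderPoint, real_inner_smul_left, inner_vanderVec, vanderVec_ne_zero] using hperp i hi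
  have hfactor := eq_C_leadingCoeff_mul_prod_X_sub_C hQ
    ((Nat.le_of_lt_succ (ofFn_natDegree_lt (by omega) _)).trans
      (by rw [card_image_of_injective _ hξ, hs])) hroots
  refine ⟨Q.leadingCoeff, leadingCoeff_ne_zero.2 hQ, fun i => ?_⟩
  rw [inner_vanderVec, congrArg (eval _) hfactor, eval_mul, eval_C, eval_prod, prod_image hξ.injOn]
  simp only [eval_sub, eval_X, eval_C, ξ, add_sub_add_right_eq_sub]
  ring

theorem inner_vanderPoint_mul_inner_vanderPoint_neg {N n : ℕ} {s : Finset (Fin n)} (hs : #s = N)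
    {p : EuclideanSpace ℝ (Fin (N + 1))} (hp : p ≠ 0)
    (hperp : ∀ i ∈ s, ⟪vanderPoint N n i, p⟫ = 0) {a b : Fin n} (hab : a < b) (ha : a ∉ s)
    (hb : b ∉ s) (hbetween : ∀ c, a < c → c < b → c ∈ s) :
    ⟪vanderPoint N n a, p⟫ * ⟪vanderPoint N n b, p⟫ < 0 := by
  obtain ⟨c, hc, hinner⟩ := exists_inner_vanderVec_eq_mul_prod hs hp hperp
  have hcard : #{t ∈ s | a < t ∧ t < b} = (b : ℕ) - a - 1 := by
    rw [← Fin.card_Ioo]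
    congr 1
    ext t
    simp only [mem_filter, mem_Ioo, and_iff_right_iff_imp]
    exact fun h => hbetween t h.1 h.2
  have hsign := pos_neg_one_pow_card_mul_prod_sub_mul_sub
    (ξ := fun i : Fin n => (i : ℝ)) (fun i j h => by simpa using h) s hab ha hb
  rw [hcard] at hsign
  have hnorm : ∀ i, 0 < ‖vanderVec N n i‖⁻¹ := fun i => by positivity [vanderVec_ne_zero N n i]
  calc ⟪vanderPoint N n a, p⟫ * ⟪vanderPoint N n b, p⟫
      = -(‖vanderVec N n a‖⁻¹ * ‖vanderVec N n b‖⁻¹ * c ^ 2 *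
          ((-1) ^ ((b : ℕ) - a - 1) * ∏ t ∈ s, ((a : ℝ) - t) * ((b : ℝ) - t))) := by
        rw [vanderPoint, vanderPoint, real_inner_smul_left, real_inner_smul_left, hinner, hinner,
          prod_mul_distrib]
        linear_combination (‖vanderVec N n a‖⁻¹ * ‖vanderVec N n b‖⁻¹ * c ^ 2 *
          (∏ t ∈ s, ((a : ℝ) - t)) * ∏ t ∈ s, ((b : ℝ) - t)) *
            neg_one_pow_succ_mul_neg_one_pow_succ hab
    _ < 0 := neg_neg_of_pos (by have := hnorm a; have := hnorm b; positivity)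

theorem stmt_4_general (N n : ℕ) :
    (∀ i, ‖vanderPoint N n i‖ = 1) ∧
    ∀ s : Finset (Fin n), s.card = N →
      ∀ p : EuclideanSpace ℝ (Fin (N + 1)), ‖p‖ = 1 →
        (∀ i ∈ s, ⟪vanderPoint N n i, p⟫ = 0) →
        (n - N) / 2 ≤
            (Finset.univ.filter fun i => i ∉ s ∧ 0 < ⟪vanderPoint N n i, p⟫).card ∧
        (n - N) / 2 ≤
            (Finset.univ.filter fun i => i ∉ s ∧ ⟪vanderPoint N n i, p⟫ < 0).card := by
  refine ⟨norm_vanderPoint N n, fun s hs p hp hperp => ?_⟩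
  have hp0 : p ≠ 0 := by rintro rfl; simp at hp
  have hcompl : #sᶜ = n - N := by rw [card_compl, hs, Fintype.card_fin]
  have halt : ∀ a ∈ sᶜ, ∀ b ∈ sᶜ, a < b → (∀ c ∈ sᶜ, a < c → b ≤ c) →
      ⟪vanderPoint N n a, p⟫ * ⟪vanderPoint N n b, p⟫ < 0 := by
    intro a ha b hb hab hcons
    refine inner_vanderPoint_mul_inner_vanderPoint_neg hs hp0 hperp hab (mem_compl.1 ha)
      (mem_compl.1 hb) fun c hac hcb => ?_
    by_contra hc
    exact (hcb.trans_le (hcons c (mem_compl.2 hc) hac)).false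
  have hfilter : ∀ P : Fin n → Prop, [DecidablePred P] →
      univ.filter (fun i => i ∉ s ∧ P i) = sᶜ.filter P := by
    intro P _
    ext
    simp
  rw [hfilter, hfilter, ← hcompl]
  constructor
  · refine card_div_two_le_card_filter_of_or_consecutive _ _ fun a ha b hb hab hcons => ?_
    rcases mul_neg_iff.1 (halt a ha b hb hab hcons) with h | h
    · exact Or.inl h.1
    · exact Or.inr h.2
  · refine card_div_two_le_card_filter_of_or_consecutive _ _ fun a ha b hb hab hcons => ?_
    rcases mul_neg_iff.1 (halt a ha b hb hab hcons) with h | h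
    · exact Or.inr h.2
    · exact Or.inl h.1

theorem stmt_4 (N n : ℕ) (hn : N < n) :
    (∀ i, ‖vanderPoint N n i‖ = 1) ∧
    ∀ s : Finset (Fin n), s.card = N →
      ∀ p : EuclideanSpace ℝ (Fin (N + 1)), ‖p‖ = 1 →
        (∀ i ∈ s, ⟪vanderPoint N n i, p⟫ = 0) →
        (n - N) / 2 ≤
            (Finset.univ.filter fun i => i ∉ s ∧ 0 < ⟪vanderPoint N n i, p⟫).card ∧
        (n - N) / 2 ≤
            (Finset.univ.filter fun i => i ∉ s ∧ ⟪vanderPoint N n i, p⟫ < 0).card :=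
  stmt_4_general N n
end

section
/- Let y_i = (-1)^i (1, i, i^2, …, i^N) ∈ ℝ^{N+1} for i = 1,…,n with n > N. For any choice of N indices i_1 < … < i_N and any two remaining indices j < j' that are consecutive among the remaining indices, the determinants det(y_j, y_{i_1}, …, y_{i_N}) and det(y_{j'}, y_{i_1}, …, y_{i_N}) have opposite signs (both nonzero). -/
/-!
Factoring `(-1)^i` out of each row leaves a Vandermonde matrix, so
`det(y_x, y_{i_1}, …, y_{i_N}) = (-1)^x K ∏_r (i_r - x)` with `K ≠ 0` independent of `x`.
The product of the two determinants is therefore `(-1)^(j + j') K² ∏_{k ∈ s} (k - j)(k - j')`.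
A factor `(k - j)(k - j')` is negative exactly when `j < k < j'`, and all `j' - j - 1` such `k`
lie in `s`, so the total sign is `(-1)^(j + j' + j' - j - 1) = -1`.
-/

/-- The Vandermonde-type vector `y i = (-1)^i • (1, i, i², …, i^N)`. -/
noncomputable def vanderRow (N : ℕ) (i : ℕ) : Fin (N + 1) → ℝ :=
  fun j => (-1 : ℝ) ^ i * (i : ℝ) ^ (j : ℕ)

open Finset

theorem Matrix.det_vandermonde_cons {R : Type*} [CommRing R] {n : ℕ} (x : R) (v : Fin n → R) :
    (Matrix.vandermonde (Fin.cons x v : Fin (n + 1) → R)).det =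
      (∏ r, (v r - x)) * (Matrix.vandermonde v).det := by
  simp only [Matrix.det_vandermonde, Fin.prod_univ_succ, Fin.prod_Ioi_zero, Fin.prod_Ioi_succ,
    Fin.cons_zero, Fin.cons_succ]

theorem det_cons_vanderRow (N x : ℕ) (f : Fin N → ℕ) :
    (Matrix.of (Fin.cons (vanderRow N x) fun r => vanderRow N (f r))).det =
      (-1) ^ x * (∏ r, ((f r : ℝ) - x)) *
        ((∏ r, (-1 : ℝ) ^ f r) * (Matrix.vandermonde fun r => (f r : ℝ)).det) := by
  have hrows : Matrix.of (Fin.cons (vanderRow N x) fun r => vanderRow N (f r)) =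
      Matrix.of fun a b => (Fin.cons ((-1 : ℝ) ^ x) fun r => (-1 : ℝ) ^ f r : Fin (N + 1) → ℝ) a *
        Matrix.vandermonde (Fin.cons (x : ℝ) fun r => (f r : ℝ)) a b := by
    ext a b
    refine Fin.cases ?_ (fun r => ?_) a <;> rfl
  rw [hrows, Matrix.det_mul_column, Matrix.det_vandermonde_cons, Fin.prod_univ_succ]
  simp only [Fin.cons_zero, Fin.cons_succ]
  ring

theorem neg_one_pow_card_mul_prod_sub_mul_sub_pos (s : Finset ℕ) {x x' : ℕ} (hxx' : x ≤ x')
    (hx : x ∉ s) (hx' : x' ∉ s) :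
    0 < (-1 : ℝ) ^ #(s ∩ Ioo x x') * ∏ k ∈ s, ((k : ℝ) - x) * ((k : ℝ) - x') := by
  rw [← prod_inter_mul_prod_sdiff s (Ioo x x'), ← mul_assoc, ← prod_neg]
  refine mul_pos (prod_pos fun k hk => ?_) (prod_pos fun k hk => ?_)
  · obtain ⟨hxk, hkx'⟩ := mem_Ioo.mp (mem_inter.mp hk).2
    have : (x : ℝ) < k := by exact_mod_cast hxk
    have : (k : ℝ) < x' := by exact_mod_cast hkx'
    nlinarith
  · obtain ⟨hks, hkI⟩ := mem_sdiff.mp hk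
    rw [mem_Ioo] at hkI
    have hkx : k ≠ x := fun h => hx (h ▸ hks)
    have hkx' : k ≠ x' := fun h => hx' (h ▸ hks)
    rcases Nat.lt_or_gt_of_ne hkx with hlt | hgt
    · have : (k : ℝ) < x := by exact_mod_cast hlt
      have : (k : ℝ) < x' := by exact_mod_cast hlt.trans_le hxx'
      nlinarith
    · have : (x : ℝ) < k := by exact_mod_cast hgt
      have hx'k : x' < k := lt_of_le_of_ne (not_lt.mp fun h => hkI ⟨hgt, h⟩) hkx'.symm
      have : (x' : ℝ) < k := by exact_mod_cast hx'k
      nlinarith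

theorem stmt_5_general (N : ℕ)
    (s : Finset ℕ) (hcard : s.card = N)
    (j j' : ℕ)
    (hjs : j ∉ s) (hj's : j' ∉ s) (hlt : j < j')
    (hconsec : ∀ k, j < k → k < j' → k ∈ s) :
    (Matrix.of (Fin.cons (vanderRow N j)
        (fun r : Fin N => vanderRow N ((s.orderIsoOfFin hcard r : ℕ))))).det *
      (Matrix.of (Fin.cons (vanderRow N j')
        (fun r : Fin N => vanderRow N ((s.orderIsoOfFin hcard r : ℕ))))).det < 0 := by
  set f : Fin N → ℕ := fun r => (s.orderIsoOfFin hcard r : ℕ)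
  set K := (∏ r, (-1 : ℝ) ^ f r) * (Matrix.vandermonde fun r => (f r : ℝ)).det
  have hK : K ≠ 0 := by
    refine mul_ne_zero (prod_ne_zero_iff.mpr fun r _ => by positivity) ?_
    exact Matrix.det_vandermonde_ne_zero_iff.mpr
      (Nat.cast_injective.comp (Subtype.val_injective.comp (s.orderIsoOfFin hcard).injective))
  have hprod : (∏ r, ((f r : ℝ) - j)) * ∏ r, ((f r : ℝ) - j') =
      ∏ k ∈ s, ((k : ℝ) - j) * ((k : ℝ) - j') := by
    rw [← prod_mul_distrib, ← prod_coe_sort s]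
    exact (s.orderIsoOfFin hcard).toEquiv.prod_comp fun k : s => ((k : ℝ) - j) * ((k : ℝ) - j')
  have hgap : #(s ∩ Ioo j j') = j' - j - 1 := by
    rw [inter_eq_right.mpr fun k hk => hconsec k (mem_Ioo.mp hk).1 (mem_Ioo.mp hk).2,
      Nat.card_Ioo]
  have hsign : (-1 : ℝ) ^ (j + j') = -(-1) ^ (j' - j - 1) := by
    rw [show j + j' = j' - j - 1 + (2 * j + 1) by omega, pow_add, pow_succ, pow_mul]
    norm_num
  have hpos := neg_one_pow_card_mul_prod_sub_mul_sub_pos s hlt.le hjs hj's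
  rw [hgap] at hpos
  calc _ = (-1 : ℝ) ^ (j + j') * K ^ 2 * ∏ k ∈ s, ((k : ℝ) - j) * ((k : ℝ) - j') := by
        rw [det_cons_vanderRow, det_cons_vanderRow, ← hprod, pow_add]; ring
    _ = -(K ^ 2 * ((-1) ^ (j' - j - 1) * ∏ k ∈ s, ((k : ℝ) - j) * ((k : ℝ) - j'))) := by
        rw [hsign]; ring
    _ < 0 := neg_neg_of_pos (mul_pos (by positivity) hpos)

theorem stmt_5 (N n : ℕ) (hn : N < n)
    (s : Finset ℕ) (hs : s ⊆ Finset.Icc 1 n) (hcard : s.card = N)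
    (j j' : ℕ) (hj : j ∈ Finset.Icc 1 n) (hj' : j' ∈ Finset.Icc 1 n)
    (hjs : j ∉ s) (hj's : j' ∉ s) (hlt : j < j')
    (hconsec : ∀ k, j < k → k < j' → k ∈ s) :
    (Matrix.of (Fin.cons (vanderRow N j)
        (fun r : Fin N => vanderRow N ((s.orderIsoOfFin hcard r : ℕ))))).det *
      (Matrix.of (Fin.cons (vanderRow N j')
        (fun r : Fin N => vanderRow N ((s.orderIsoOfFin hcard r : ℕ))))).det < 0 :=
  stmt_5_general N s hcard j j' hjs hj's hlt hconsec
end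

section
/- For any n points on S^N (N ≥ 1), there is an open hemisphere containing at least ⌊(n+1)/2⌋ of the points. -/
open scoped RealInnerProductSpace

/-! Choose a pole `p` whose great circle `pᗮ` avoids all the points: it exists because a real
vector space is not a finite union of proper subspaces. Then every point lies in one of the
two open hemispheres with poles `p` and `-p`, so one of them contains at least half of them. -/

theorem Subspace.exists_forall_notMem_of_ne_top {k E ι : Type*} [DivisionRing k] [Infinite k]
    [AddCommGroup E] [Module k E] [Finite ι] {p : ι → Subspace k E} (hp : ∀ i, p i ≠ ⊤) :
    ∃ v, ∀ i, v ∉ p i := by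
  by_contra! hcover
  obtain ⟨i, hi⟩ := Subspace.exists_eq_top_of_iUnion_eq_univ (p := p)
    (Set.eq_univ_of_forall fun v => Set.mem_iUnion.mpr (hcover v))
  exact hp i hi

theorem exists_norm_eq_one_forall_inner_ne_zero {E ι : Type*} [NormedAddCommGroup E]
    [InnerProductSpace ℝ E] [Nontrivial E] [Finite ι] {x : ι → E} (hx : ∀ i, x i ≠ 0) :
    ∃ p : E, ‖p‖ = 1 ∧ ∀ i, ⟪x i, p⟫ ≠ 0 := by
  -- the extra subspace `⊥` at `none` makes the vector found nonzero
  let P : Option ι → Submodule ℝ E := fun o => o.elim ⊥ fun i => (ℝ ∙ x i)ᗮ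
  have hP : ∀ o, P o ≠ ⊤
    | none => bot_ne_top
    | some i => by
      simpa [P, Submodule.orthogonal_eq_top_iff, Submodule.span_singleton_eq_bot] using hx i
  obtain ⟨v, hv⟩ := Subspace.exists_forall_notMem_of_ne_top hP
  have hv0 : v ≠ 0 := by simpa [P] using hv none
  refine ⟨‖v‖⁻¹ • v, norm_smul_inv_norm hv0, fun i => ?_⟩
  have hvi : ⟪x i, v⟫ ≠ 0 := by
    simpa [P, Submodule.mem_orthogonal_singleton_iff_inner_right] using hv (some i)
  rw [real_inner_smul_right]
  exact mul_ne_zero (inv_ne_zero (norm_ne_zero_iff.mpr hv0)) hvi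

theorem Finset.card_filter_lt_add_card_filter_gt {ι α : Type*} [LinearOrder α] (s : Finset ι)
    {f : ι → α} {c : α} (hf : ∀ i ∈ s, f i ≠ c) :
    (s.filter fun i => c < f i).card + (s.filter fun i => f i < c).card = s.card := by
  rw [← s.card_filter_add_card_filter_not fun i => c < f i]
  congr 1
  refine congrArg Finset.card (Finset.filter_congr fun i hi => ?_)
  rw [not_lt]
  exact ⟨le_of_lt, fun h => lt_of_le_of_ne h (hf i hi)⟩

theorem stmt_18_general (N : ℕ) (n : ℕ)
    (x : Fin n → EuclideanSpace ℝ (Fin (N + 1)))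
    (hx : ∀ i, ‖x i‖ = 1) :
    ∃ p : EuclideanSpace ℝ (Fin (N + 1)), ‖p‖ = 1 ∧
      (n + 1) / 2 ≤ (Finset.univ.filter fun i => 0 < ⟪x i, p⟫).card := by
  obtain ⟨p, hp, hpx⟩ := exists_norm_eq_one_forall_inner_ne_zero fun i =>
    norm_ne_zero_iff.mp (by rw [hx i]; exact one_ne_zero)
  have hsplit := Finset.univ.card_filter_lt_add_card_filter_gt fun i _ => hpx i
  rw [Finset.card_univ, Fintype.card_fin] at hsplit
  rcases le_or_gt ((n + 1) / 2) (Finset.univ.filter fun i => 0 < ⟪x i, p⟫).card with h | h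
  · exact ⟨p, hp, h⟩
  · refine ⟨-p, by rw [norm_neg, hp], ?_⟩
    simp only [inner_neg_right, neg_pos]
    omega

theorem stmt_18 (N : ℕ) (hN : 1 ≤ N) (n : ℕ)
    (x : Fin n → EuclideanSpace ℝ (Fin (N + 1)))
    (hx : ∀ i, ‖x i‖ = 1) :
    ∃ p : EuclideanSpace ℝ (Fin (N + 1)), ‖p‖ = 1 ∧
      (n + 1) / 2 ≤ (Finset.univ.filter fun i => 0 < ⟪x i, p⟫).card :=
  stmt_18_general N n x hx
end
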